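/- Let G=(V,E) be a finite simple graph without isolated vertices and let T₁, …, T_s be the maximal tubings of G. For each i set σ_i = conv{ z_t : t ∈ T_i }. Then {σ₁, …, σ_s} is a triangulation of the dual cosmological polytope C_G°: each σ_i is a simplex of dimension |V|+|E|−1 (the |V|+|E| points z_t, t ∈ T_i, are affinely independent), the union of the σ_i equals C_G°, and for all i, j the intersection σ_i ∩ σ_j equals conv{ z_t : t ∈ T_i ∩ T_j } and is a common face of σ_i and σ_j. -/

import Mathlib

/-!
A point of `C_G°` is a point of `H` that is a nonnegative combination `∑ c_t h_t`. Since the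
`y_e`-coordinate of such a combination is `x_u + x_w - 2 ∑_{t ∋ e} c_t` for `e = {u, w}`, it is
determined by its vertex weights `∑_{t ∋ v} c_t` and its edge weights `∑_{t ∋ e} c_t`.

Every edge tube `t` of a tubing `T` has a private edge: one that lies only in the tubes of `T`
containing `t`. In a maximal tubing it is unique, and every edge is the private edge of some
tube, so `|T| = |V| + |E|`; reading off edge weights at private edges from the top down shows
that the `h_t`, `t ∈ T`, are linearly independent.

Covering: the edge weights of a point are decomposed like a layer cake into the connected
components of their superlevel sets, a compatible family of tubes with the same edge weights,
and singleton tubes make up the vertex weights. Intersections: if a point of `σ_{T₁} ∩ σ_{T₂}`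
gives a positive coefficient to `t ∈ T₁ ∖ T₂`, let `u` be the smallest tube of `T₂` containing
`t`; comparing edge weights at a private edge of `u` inside `t` and at an edge of `u` leaving
`t` gives a contradiction. The common face is cut out by a linear functional vanishing on
`h_t` for `t ∈ T₁ ∩ T₂` and positive on the other vertices.
-/

set_option linter.unusedSectionVars false
set_option linter.unusedVariables false

open Finset

variable {V : Type} [Fintype V] [DecidableEq V]

/-- A tube of the graph on vertex type `V` with edge set `E`: a nonempty connected
(not necessarily induced) subgraph, recorded by its vertex set and edge set.
(The field `verts_in` records that all vertices of a tube are vertices of the graph,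
where, the graph having no isolated vertices, its vertex set is the set of endpoints of `E`.) -/
structure Tube (E : Finset (Sym2 V)) where
  verts : Finset V
  edges : Finset (Sym2 V)
  nonempty : verts.Nonempty
  edges_sub : edges ⊆ E
  verts_in : ∀ v ∈ verts, ∃ e ∈ E, v ∈ e
  endpoints_mem : ∀ e ∈ edges, ∀ v ∈ e, v ∈ verts
  conn : ∀ u ∈ verts, ∀ w ∈ verts,
    Relation.ReflTransGen (fun a b => s(a, b) ∈ edges) u w

theorem Tube.ext' {E : Finset (Sym2 V)} {a b : Tube E}
    (h1 : a.verts = b.verts) (h2 : a.edges = b.edges) : a = b := by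
  cases a; cases b; subst h1; subst h2; rfl

instance {E : Finset (Sym2 V)} : DecidableEq (Tube E) := fun a b =>
  decidable_of_iff (a.verts = b.verts ∧ a.edges = b.edges)
    ⟨fun h => Tube.ext' h.1 h.2, fun h => by subst h; exact ⟨rfl, rfl⟩⟩

noncomputable instance {E : Finset (Sym2 V)} : Fintype (Tube E) :=
  Fintype.ofInjective (fun t => (t.verts, t.edges))
    (fun a b h => Tube.ext' (congrArg Prod.fst h) (congrArg Prod.snd h))

/-- The coordinates of the ambient space `ℝ^(V ⊔ E)`. -/
abbrev Coord (E : Finset (Sym2 V)) := V ⊕ {e : Sym2 V // e ∈ E}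

/-- The standard inner product on `ℝ^(V ⊔ E)`. -/
def dot {E : Finset (Sym2 V)} (x y : Coord E → ℝ) : ℝ := ∑ i, x i * y i

/-- The facet normal `h_t = Σ_{v ∈ V(t)} x_v + Σ_{e ∈ E∖E(t)} |e ∩ V(t)|·y_e`. -/
def hvec {E : Finset (Sym2 V)} (t : Tube E) : Coord E → ℝ := fun i =>
  match i with
  | Sum.inl v => if v ∈ t.verts then 1 else 0
  | Sum.inr e => if e.1 ∈ t.edges then 0
      else ((t.verts.filter (fun v => v ∈ e.1)).card : ℝ)

/-- `|h_t|₁`, the sum of the coordinates of `h_t`. -/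
def ell {E : Finset (Sym2 V)} (t : Tube E) : ℝ := ∑ i, hvec t i

/-- `z_t = h_t / |h_t|₁`. -/
noncomputable def zvec {E : Finset (Sym2 V)} (t : Tube E) : Coord E → ℝ := (ell t)⁻¹ • hvec t

/-- The vertices `p_e, p_{e,v}, p_{e,w}` of the cosmological polytope (note that
`p_{e,w}` is obtained from `p_{e,v}` by exchanging the roles of `v` and `w`). -/
def cosmoVerts (E : Finset (Sym2 V)) : Set (Coord E → ℝ) :=
  {q | ∃ (v w : V) (he : s(v, w) ∈ E),
      q = Pi.single (Sum.inl v) 1 + Pi.single (Sum.inl w) 1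
            - Pi.single (Sum.inr ⟨s(v, w), he⟩) 1 ∨
      q = Pi.single (Sum.inl v) 1 - Pi.single (Sum.inl w) 1
            + Pi.single (Sum.inr ⟨s(v, w), he⟩) 1}

/-- The cosmological polytope `C_G`. -/
def cosmo (E : Finset (Sym2 V)) : Set (Coord E → ℝ) := convexHull ℝ (cosmoVerts E)

/-- The dual cosmological polytope `C_G° = conv{ z_t : t a tube }`. -/
def dualCosmo (E : Finset (Sym2 V)) : Set (Coord E → ℝ) :=
  convexHull ℝ {z | ∃ t : Tube E, z = zvec t}

/-- The affine hyperplane `H` of points whose coordinates sum to `1`. -/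
def hyperplaneH (E : Finset (Sym2 V)) : Set (Coord E → ℝ) := {z | ∑ i, z i = 1}

/-- A tubing: a set of tubes, pairwise disjoint or nested. -/
def IsTubing (E : Finset (Sym2 V)) (T : Finset (Tube E)) : Prop :=
  ∀ t₁ ∈ T, ∀ t₂ ∈ T,
    Disjoint t₁.verts t₂.verts ∨ t₁.edges ⊆ t₂.edges ∨ t₂.edges ⊆ t₁.edges

/-- A maximal tubing: a tubing maximal under inclusion. -/
def IsMaxTubing (E : Finset (Sym2 V)) (T : Finset (Tube E)) : Prop :=
  IsTubing E T ∧ ∀ T' : Finset (Tube E), IsTubing E T' → T ⊆ T' → T' = T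

/-- `F` is a face of the polytope `P`: `P` itself, `∅`, or the intersection of `P`
with a supporting hyperplane. -/
def IsFace {E : Finset (Sym2 V)} (F P : Set (Coord E → ℝ)) : Prop :=
  F = P ∨ F = ∅ ∨
    ∃ (a : Coord E → ℝ) (c : ℝ), (∀ x ∈ P, c ≤ dot a x) ∧ F = {x | x ∈ P ∧ dot a x = c}

lemma mem_convexHull_image_iff {ι F : Type*} [AddCommGroup F] [Module ℝ F] (s : Finset ι)
    (p : ι → F) {x : F} :
    x ∈ convexHull ℝ (p '' s) ↔
      ∃ w : ι → ℝ, (∀ i ∈ s, 0 ≤ w i) ∧ ∑ i ∈ s, w i = 1 ∧ ∑ i ∈ s, w i • p i = x := by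
  classical
  refine ⟨fun hx => convexHull_min (t := {y | ∃ w : ι → ℝ, (∀ i ∈ s, 0 ≤ w i) ∧
    ∑ i ∈ s, w i = 1 ∧ ∑ i ∈ s, w i • p i = y}) ?_ ?_ hx, ?_⟩
  · rintro _ ⟨i, hi, rfl⟩
    refine ⟨Pi.single i 1, fun j _ => ?_, ?_, ?_⟩
    · by_cases hj : j = i <;> simp [hj]
    · simp [sum_pi_single', mem_coe.1 hi]
    · simp [Pi.single_apply, mem_coe.1 hi]
  · rintro _ ⟨w₁, h0₁, h1₁, rfl⟩ _ ⟨w₂, h0₂, h1₂, rfl⟩ a b ha hb hab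
    refine ⟨a • w₁ + b • w₂, fun i hi => ?_, ?_, ?_⟩
    · simpa using add_nonneg (mul_nonneg ha (h0₁ i hi)) (mul_nonneg hb (h0₂ i hi))
    · simp [sum_add_distrib, ← mul_sum, h1₁, h1₂, hab]
    · simp [add_smul, mul_smul, sum_add_distrib, smul_sum]
  · rintro ⟨w, hw0, hw1, rfl⟩
    rw [← centerMass_eq_of_sum_1 _ _ hw1]
    exact centerMass_mem_convexHull _ hw0 (hw1 ▸ one_pos) fun i hi => ⟨i, hi, rfl⟩

lemma LinearIndepOn.exists_linearMap_apply_eq {ι F : Type*} [AddCommGroup F] [Module ℝ F]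
    {v : ι → F} {s : Set ι} (hv : LinearIndepOn ℝ v s) (c : ι → ℝ) :
    ∃ φ : F →ₗ[ℝ] ℝ, ∀ i ∈ s, φ (v i) = c i := by
  have hv' : LinearIndependent ℝ fun i : s => v i := hv
  obtain ⟨φ, hφ⟩ := LinearMap.exists_extend ((Module.Basis.span hv').constr ℝ fun i : s => c i)
  refine ⟨φ, fun i hi => ?_⟩
  have := LinearMap.congr_fun hφ (Module.Basis.span hv' ⟨i, hi⟩)
  rwa [LinearMap.comp_apply, Module.Basis.constr_basis, Module.Basis.span_apply] at this

section Tubes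

variable {E : Finset (Sym2 V)}

abbrev EdgeRel (A : Finset (Sym2 V)) (a b : V) : Prop := s(a, b) ∈ A

lemma reflTransGen_edgeRel_symm {A : Finset (Sym2 V)} {a b : V}
    (h : Relation.ReflTransGen (EdgeRel A) a b) : Relation.ReflTransGen (EdgeRel A) b a := by
  have hswap : Function.swap (EdgeRel A) = EdgeRel A := by
    funext a b; simp [Function.swap, EdgeRel, Sym2.eq_swap]
  simpa [hswap] using h.swap

lemma reflTransGen_edgeRel_mono {A B : Finset (Sym2 V)} (hAB : A ⊆ B) {a b : V}
    (h : Relation.ReflTransGen (EdgeRel A) a b) : Relation.ReflTransGen (EdgeRel B) a b :=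
  Relation.ReflTransGen.mono (fun _ _ hab => hAB hab) _ _ h

namespace Tube

lemma exists_verts_eq_singleton (t : Tube E) (h : t.edges = ∅) : ∃ v, t.verts = {v} := by
  obtain ⟨v, hv⟩ := t.nonempty
  refine ⟨v, eq_singleton_iff_unique_mem.2 ⟨hv, fun u hu => ?_⟩⟩
  have hc := t.conn u hu v hv
  rw [h] at hc
  induction hc with
  | refl => rfl
  | tail _ hst _ => simp at hst

lemma mem_verts_iff (t : Tube E) (h : t.edges.Nonempty) {v : V} :
    v ∈ t.verts ↔ ∃ f ∈ t.edges, v ∈ f := by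
  refine ⟨fun hv => ?_, fun ⟨f, hf, hvf⟩ => t.endpoints_mem f hf v hvf⟩
  obtain ⟨f₀, hf₀⟩ := h
  have ha := Sym2.out_fst_mem f₀
  rcases (t.conn v hv _ (t.endpoints_mem f₀ hf₀ _ ha)).cases_head with rfl | ⟨c, hc, _⟩
  · exact ⟨f₀, hf₀, ha⟩
  · exact ⟨s(v, c), hc, Sym2.mem_mk_left v c⟩

lemma verts_subset_of_edges_subset {t s : Tube E} (hne : t.edges.Nonempty)
    (h : t.edges ⊆ s.edges) : t.verts ⊆ s.verts := fun v hv => by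
  obtain ⟨f, hf, hvf⟩ := (t.mem_verts_iff hne).1 hv
  exact s.endpoints_mem f (h hf) v hvf

lemma eq_of_edges_eq {t s : Tube E} (hne : t.edges.Nonempty) (h : t.edges = s.edges) :
    t = s :=
  Tube.ext' ((verts_subset_of_edges_subset hne h.le).antisymm
    (verts_subset_of_edges_subset (h ▸ hne) h.ge)) h

lemma edges_induction (t : Tube E) {K : Sym2 V → Prop}
    (hK : ∀ f ∈ t.edges, ∀ f' ∈ t.edges, ∀ v ∈ f, v ∈ f' → K f → K f')
    {f₀ : Sym2 V} (hf₀ : f₀ ∈ t.edges) (h₀ : K f₀) : ∀ f ∈ t.edges, K f := by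
  have ha := Sym2.out_fst_mem f₀
  have hreach : ∀ w, Relation.ReflTransGen (EdgeRel t.edges) f₀.out.1 w →
      ∃ f ∈ t.edges, w ∈ f ∧ K f := by
    intro w hpath
    induction hpath with
    | refl => exact ⟨f₀, hf₀, ha, h₀⟩
    | @tail b c _ hbc ih =>
      obtain ⟨f, hf, hbf, hKf⟩ := ih
      exact ⟨s(b, c), hbc, Sym2.mem_mk_right b c,
        hK f hf _ hbc b hbf (Sym2.mem_mk_left b c) hKf⟩
  intro f hf
  have hw := Sym2.out_fst_mem f
  obtain ⟨f', hf', hwf', hKf'⟩ :=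
    hreach _ (t.conn _ (t.endpoints_mem f₀ hf₀ _ ha) _ (t.endpoints_mem f hf _ hw))
  exact hK f' hf' f hf _ hwf' hw hKf'

lemma exists_boundary_edge {t u : Tube E} (hne : t.edges.Nonempty) (hsub : t.edges ⊆ u.edges)
    (hproper : t.edges ≠ u.edges) :
    ∃ f ∈ u.edges, f ∉ t.edges ∧ ∃ v ∈ f, v ∈ t.verts := by
  by_contra! h
  obtain ⟨f₀, hf₀⟩ := hne
  refine hproper (hsub.antisymm fun f hf => ?_)
  refine u.edges_induction (K := (· ∈ t.edges)) (fun f₁ _ f₂ hf₂ v hv₁ hv₂ hf₁ => ?_)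
    (hsub hf₀) hf₀ f hf
  by_contra hf₂t
  exact h f₂ hf₂ hf₂t v hv₂ (t.endpoints_mem f₁ hf₁ v hv₁)

def ofVertex (hiso : ∀ v : V, ∃ e ∈ E, v ∈ e) (v : V) : Tube E where
  verts := {v}
  edges := ∅
  nonempty := singleton_nonempty v
  edges_sub := empty_subset E
  verts_in := fun u hu => mem_singleton.1 hu ▸ hiso u
  endpoints_mem := by simp
  conn := fun u hu w hw => by
    rw [mem_singleton.1 hu, mem_singleton.1 hw]

lemma eq_ofVertex (hiso : ∀ v : V, ∃ e ∈ E, v ∈ e) {t : Tube E} {v : V}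
    (h : t.edges = ∅) (hv : v ∈ t.verts) : t = ofVertex hiso v := by
  obtain ⟨w, hw⟩ := t.exists_verts_eq_singleton h
  rw [hw, mem_singleton] at hv
  exact Tube.ext' (hw.trans (by rw [hv]; rfl)) h

lemma ofVertex_injective (hiso : ∀ v : V, ∃ e ∈ E, v ∈ e) :
    Function.Injective (ofVertex (E := E) hiso) := fun a b h => by
  simpa [ofVertex] using congrArg Tube.verts h

def ofEdge {e : Sym2 V} (he : e ∈ E) : Tube E where
  verts := univ.filter (· ∈ e)
  edges := {e}
  nonempty := ⟨_, mem_filter.2 ⟨mem_univ _, Sym2.out_fst_mem e⟩⟩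
  edges_sub := singleton_subset_iff.2 he
  verts_in := fun v hv => ⟨e, he, (mem_filter.1 hv).2⟩
  endpoints_mem := fun f hf v hv => mem_filter.2 ⟨mem_univ v, mem_singleton.1 hf ▸ hv⟩
  conn := fun u hu w hw => by
    rcases eq_or_ne u w with rfl | hne
    · rfl
    · exact .single (mem_singleton.2 ((Sym2.mem_and_mem_iff hne).1
        ⟨(mem_filter.1 hu).2, (mem_filter.1 hw).2⟩).symm)

@[simp] lemma ofEdge_edges {e : Sym2 V} (he : e ∈ E) : (ofEdge he).edges = {e} := rfl

@[simp] lemma mem_ofEdge_verts {e : Sym2 V} (he : e ∈ E) {v : V} :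
    v ∈ (ofEdge he).verts ↔ v ∈ e := by
  simp [ofEdge]

def biUnion (t₀ : Tube E) (F : Finset (Tube E)) (hF : ∀ s ∈ F, ¬ Disjoint t₀.verts s.verts) :
    Tube E where
  verts := t₀.verts ∪ F.biUnion Tube.verts
  edges := t₀.edges ∪ F.biUnion Tube.edges
  nonempty := t₀.nonempty.mono subset_union_left
  edges_sub := union_subset t₀.edges_sub (biUnion_subset.2 fun s _ => s.edges_sub)
  verts_in := by
    simp only [mem_union, mem_biUnion]
    rintro v (hv | ⟨s, -, hv⟩)
    exacts [t₀.verts_in v hv, s.verts_in v hv]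
  endpoints_mem := by
    simp only [mem_union, mem_biUnion]
    rintro f (hf | ⟨s, hs, hf⟩) v hv
    exacts [Or.inl (t₀.endpoints_mem f hf v hv), Or.inr ⟨s, hs, s.endpoints_mem f hf v hv⟩]
  conn := by
    set A := t₀.edges ∪ F.biUnion Tube.edges
    have h₀ : t₀.edges ⊆ A := subset_union_left
    have hs : ∀ s ∈ F, s.edges ⊆ A := fun s hs =>
      subset_union_right.trans' (subset_biUnion_of_mem _ hs)
    have hhub : ∀ u ∈ t₀.verts ∪ F.biUnion Tube.verts,
        ∃ p ∈ t₀.verts, Relation.ReflTransGen (EdgeRel A) u p := by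
      simp only [mem_union, mem_biUnion]
      rintro u (hu | ⟨s, hsF, hu⟩)
      · exact ⟨u, hu, .refl⟩
      · obtain ⟨p, hp₀, hps⟩ := not_disjoint_iff.1 (hF s hsF)
        exact ⟨p, hp₀, reflTransGen_edgeRel_mono (hs s hsF) (s.conn u hu p hps)⟩
    intro u hu w hw
    obtain ⟨p, hp, hup⟩ := hhub u hu
    obtain ⟨q, hq, hwq⟩ := hhub w hw
    exact (hup.trans (reflTransGen_edgeRel_mono h₀ (t₀.conn p hp q hq))).trans
      (reflTransGen_edgeRel_symm hwq)

lemma edges_subset_biUnion {t₀ : Tube E} {F : Finset (Tube E)}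
    {hF : ∀ s ∈ F, ¬ Disjoint t₀.verts s.verts} {s : Tube E} (hs : s ∈ F) :
    s.edges ⊆ (t₀.biUnion F hF).edges :=
  subset_union_right.trans' (subset_biUnion_of_mem _ hs)

end Tube

end Tubes

section Tubings

variable {E : Finset (Sym2 V)} {T : Finset (Tube E)}

def Tube.Compatible (t s : Tube E) : Prop :=
  Disjoint t.verts s.verts ∨ t.edges ⊆ s.edges ∨ s.edges ⊆ t.edges

lemma Tube.Compatible.symm {t s : Tube E} (h : t.Compatible s) : s.Compatible t := by
  rcases h with h | h | h
  exacts [Or.inl h.symm, Or.inr (Or.inr h), Or.inr (Or.inl h)]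

lemma Tube.compatible_of_edges_eq_empty {t : Tube E} (h : t.edges = ∅) (s : Tube E) :
    t.Compatible s :=
  Or.inr (Or.inl (h ▸ empty_subset _))

lemma Tube.Compatible.subset_or_subset {t s : Tube E} (h : t.Compatible s) {v : V}
    (hvt : v ∈ t.verts) (hvs : v ∈ s.verts) : t.edges ⊆ s.edges ∨ s.edges ⊆ t.edges :=
  h.resolve_left (not_disjoint_iff.2 ⟨v, hvt, hvs⟩)

def IsPrivateEdge (T : Finset (Tube E)) (u : Tube E) (f : Sym2 V) : Prop :=
  ∀ s ∈ T, f ∈ s.edges ↔ u.edges ⊆ s.edges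

lemma exists_isMaxTubing_superset {T₀ : Finset (Tube E)} (h : IsTubing E T₀) :
    ∃ T, IsMaxTubing E T ∧ T₀ ⊆ T := by
  obtain ⟨T, hle, hmax⟩ := Finite.exists_le_maximal h
  exact ⟨T, ⟨hmax.prop, fun T' hT' hTT' => (hmax.eq_of_le hT' hTT').symm⟩, hle⟩

namespace IsTubing

lemma subset_or_subset (hT : IsTubing E T) {t s : Tube E} (ht : t ∈ T) (hs : s ∈ T) {v : V}
    (hvt : v ∈ t.verts) (hvs : v ∈ s.verts) : t.edges ⊆ s.edges ∨ s.edges ⊆ t.edges :=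
  Tube.Compatible.subset_or_subset (hT t ht s hs) hvt hvs

lemma subset_or_subset_of_mem_edges (hT : IsTubing E T) {t s : Tube E} (ht : t ∈ T)
    (hs : s ∈ T) {f : Sym2 V} (hft : f ∈ t.edges) (hfs : f ∈ s.edges) :
    t.edges ⊆ s.edges ∨ s.edges ⊆ t.edges :=
  hT.subset_or_subset ht hs (t.endpoints_mem f hft _ f.out_fst_mem)
    (s.endpoints_mem f hfs _ f.out_fst_mem)

lemma insert (hT : IsTubing E T) {u : Tube E} (hu : ∀ s ∈ T, u.Compatible s) :
    IsTubing E (insert u T) := by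
  intro t₁ h₁ t₂ h₂
  rw [mem_insert] at h₁ h₂
  rcases h₁ with rfl | h₁ <;> rcases h₂ with rfl | h₂
  exacts [Or.inr (Or.inl subset_rfl), hu t₂ h₂, (hu t₁ h₁).symm, hT t₁ h₁ t₂ h₂]

lemma exists_mem_edges_superset (hT : IsTubing E T) (P : Tube E → Prop) {t : Tube E}
    (hne : t.edges.Nonempty) (hcov : ∀ f ∈ t.edges, ∃ s ∈ T, P s ∧ f ∈ s.edges) :
    ∃ s ∈ T, P s ∧ t.edges ⊆ s.edges := by
  classical
  set C := T.filter fun s => P s ∧ ∃ f ∈ t.edges, f ∈ s.edges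
  have hC : ∀ f ∈ t.edges, ∀ s ∈ T, P s → f ∈ s.edges → s ∈ C :=
    fun f hf s hs hPs hfs => mem_filter.2 ⟨hs, hPs, f, hf, hfs⟩
  obtain ⟨f₀, hf₀⟩ := hne
  obtain ⟨s₀, hs₀, hPs₀, hf₀s₀⟩ := hcov f₀ hf₀
  -- a largest such tube absorbs the tubes covering the neighbouring edges
  obtain ⟨m, hmC, hmax⟩ :=
    C.exists_max_image (fun s => s.edges.card) ⟨s₀, hC f₀ hf₀ s₀ hs₀ hPs₀ hf₀s₀⟩
  obtain ⟨hm, hPm, f₁, hf₁, hf₁m⟩ := mem_filter.1 hmC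
  refine ⟨m, hm, hPm, t.edges_induction (K := (· ∈ m.edges)) ?_ hf₁ hf₁m⟩
  intro f _ f' hf' v hvf hvf' hfm
  obtain ⟨s, hs, hPs, hf's⟩ := hcov f' hf'
  rcases hT.subset_or_subset hs hm (s.endpoints_mem f' hf's v hvf')
      (m.endpoints_mem f hfm v hvf) with h | h
  · exact h hf's
  · rwa [eq_of_subset_of_card_le h (hmax s (hC f' hf' s hs hPs hf's))]

lemma exists_isPrivateEdge_of_minimal (hT : IsTubing E T) {t u : Tube E}
    (hne : t.edges.Nonempty) (hu : u ∈ T) (htu : t.edges ⊆ u.edges)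
    (hmin : ∀ s ∈ T, t.edges ⊆ s.edges → u.edges ⊆ s.edges) :
    ∃ f ∈ t.edges, IsPrivateEdge T u f := by
  obtain ⟨f, hf, hfmin⟩ : ∃ f ∈ t.edges, ∀ s ∈ T, f ∈ s.edges → ¬ s.edges ⊂ u.edges := by
    by_contra! h
    obtain ⟨s, hs, hsu, hts⟩ := hT.exists_mem_edges_superset (·.edges ⊂ u.edges) hne
      fun f hf => (h f hf).imp fun s ⟨hs, hfs, hsu⟩ => ⟨hs, hsu, hfs⟩
    exact hsu.not_subset (hmin s hs hts)
  refine ⟨f, hf, fun s hs => ⟨fun hfs => ?_, fun h => h (htu hf)⟩⟩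
  rcases hT.subset_or_subset_of_mem_edges hs hu hfs (htu hf) with h | h
  · by_contra hus
    exact hfmin s hs hfs (ssubset_of_subset_not_subset h hus)
  · exact h

lemma exists_isPrivateEdge (hT : IsTubing E T) {t : Tube E} (ht : t ∈ T)
    (hne : t.edges.Nonempty) : ∃ f ∈ t.edges, IsPrivateEdge T t f :=
  hT.exists_isPrivateEdge_of_minimal hne ht subset_rfl fun _ _ h => h

end IsTubing

namespace IsMaxTubing

lemma mem_of_compatible (hT : IsMaxTubing E T) {u : Tube E} (hu : ∀ s ∈ T, u.Compatible s) :
    u ∈ T :=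
  hT.2 _ (hT.1.insert hu) (subset_insert u T) ▸ mem_insert_self u T

lemma mem_of_edges_eq_empty (hT : IsMaxTubing E T) {u : Tube E} (hu : u.edges = ∅) : u ∈ T :=
  hT.mem_of_compatible fun s _ => Tube.compatible_of_edges_eq_empty hu s

/-- The edge `e` together with the tubes of `T` that touch `e` and lie strictly below `C` forms
a tube compatible with `T`. -/
lemma exists_mem_of_ceiling (hT : IsMaxTubing E T) {e : Sym2 V} (he : e ∈ E)
    {C : Finset (Sym2 V)} (heC : e ∈ C)
    (hC : ∀ s ∈ T, (∃ v ∈ e, v ∈ s.verts) → s.edges ⊂ C ∨ C ⊆ s.edges) :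
    ∃ u ∈ T, e ∈ u.edges ∧ ∀ f ∈ u.edges, f = e ∨ ∃ s ∈ T, f ∈ s.edges ∧ s.edges ⊂ C := by
  classical
  set F := T.filter fun s => (∃ v ∈ e, v ∈ s.verts) ∧ s.edges ⊂ C ∧ s.edges.Nonempty
  have hF : ∀ s ∈ F, ¬ Disjoint (Tube.ofEdge he).verts s.verts := fun s hs => by
    obtain ⟨-, ⟨v, hve, hvs⟩, -⟩ := mem_filter.1 hs
    exact not_disjoint_iff.2 ⟨v, (Tube.mem_ofEdge_verts he).2 hve, hvs⟩
  set u := (Tube.ofEdge he).biUnion F hF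
  have hu : ∀ f ∈ u.edges, f = e ∨ ∃ s ∈ T, f ∈ s.edges ∧ s.edges ⊂ C := by
    simp only [u, Tube.biUnion, mem_union, Tube.ofEdge_edges, mem_singleton, mem_biUnion]
    rintro f (rfl | ⟨s, hs, hfs⟩)
    · exact Or.inl rfl
    · exact Or.inr ⟨s, (mem_filter.1 hs).1, hfs, (mem_filter.1 hs).2.2.1⟩
  have huC : u.edges ⊆ C := fun f hf => by
    rcases hu f hf with rfl | ⟨s, -, hfs, hsC⟩
    exacts [heC, hsC.subset hfs]
  have htouch : ∀ s ∈ T, s.edges.Nonempty → (∃ v ∈ e, v ∈ s.verts) → u.Compatible s := by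
    intro s hs hne hse
    rcases hC s hs hse with h | h
    · exact Or.inr (Or.inr (Tube.edges_subset_biUnion (mem_filter.2 ⟨hs, hse, h, hne⟩)))
    · exact Or.inr (Or.inl (huC.trans h))
  refine ⟨u, hT.mem_of_compatible fun s hs => ?_, mem_union_left _ (mem_singleton_self e), hu⟩
  rcases s.edges.eq_empty_or_nonempty with hempty | hne
  · exact (Tube.compatible_of_edges_eq_empty hempty u).symm
  by_cases hd : Disjoint u.verts s.verts
  · exact Or.inl hd
  obtain ⟨v, hvu, hvs⟩ := not_disjoint_iff.1 hd
  simp only [u, Tube.biUnion, mem_union, Tube.mem_ofEdge_verts, mem_biUnion] at hvu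
  rcases hvu with hve | ⟨s', hs'F, hvs'⟩
  · exact htouch s hs hne ⟨v, hve, hvs⟩
  obtain ⟨hs', ⟨p, hpe, hps'⟩, -, hne'⟩ := mem_filter.1 hs'F
  rcases hT.1.subset_or_subset hs hs' hvs hvs' with h | h
  · exact Or.inr (Or.inr (h.trans (Tube.edges_subset_biUnion hs'F)))
  · exact htouch s hs hne ⟨p, hpe, Tube.verts_subset_of_edges_subset hne' h hps'⟩

lemma exists_mem_edges (hT : IsMaxTubing E T) {e : Sym2 V} (he : e ∈ E) :
    ∃ u ∈ T, e ∈ u.edges := by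
  obtain ⟨u, hu, heu, -⟩ := hT.exists_mem_of_ceiling he he
    fun s _ _ => (s.edges_sub.ssubset_or_eq).imp id ge_of_eq
  exact ⟨u, hu, heu⟩

lemma isPrivateEdge_inj (hT : IsMaxTubing E T) {t : Tube E} (ht : t ∈ T) {e₁ e₂ : Sym2 V}
    (h₁ : IsPrivateEdge T t e₁) (h₂ : IsPrivateEdge T t e₂) : e₁ = e₂ := by
  have he₁ : e₁ ∈ t.edges := (h₁ t ht).2 subset_rfl
  have hC : ∀ s ∈ T, (∃ v ∈ e₁, v ∈ s.verts) → s.edges ⊂ t.edges ∨ t.edges ⊆ s.edges := by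
    rintro s hs ⟨v, hve, hvs⟩
    rcases hT.1.subset_or_subset hs ht hvs (t.endpoints_mem e₁ he₁ v hve) with h | h
    · exact (h.ssubset_or_eq).imp id ge_of_eq
    · exact Or.inr h
  obtain ⟨u, hu, he₁u, hsat⟩ := hT.exists_mem_of_ceiling (t.edges_sub he₁) he₁ hC
  rcases hsat e₂ ((h₁ u hu).1 he₁u ((h₂ t ht).2 subset_rfl)) with h | ⟨s, hs, he₂s, hst⟩
  · exact h.symm
  · exact absurd ((h₂ s hs).1 he₂s) hst.not_subset

lemma exists_minimal_superset (hT : IsMaxTubing E T) {t : Tube E} (hne : t.edges.Nonempty) :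
    ∃ u ∈ T, t.edges ⊆ u.edges ∧ ∀ s ∈ T, t.edges ⊆ s.edges → u.edges ⊆ s.edges := by
  classical
  obtain ⟨s₀, hs₀, -, hts₀⟩ := hT.1.exists_mem_edges_superset (fun _ => True) hne fun f hf =>
    (hT.exists_mem_edges (t.edges_sub hf)).imp fun s ⟨hs, hfs⟩ => ⟨hs, trivial, hfs⟩
  set G := T.filter fun s => t.edges ⊆ s.edges
  obtain ⟨u, huG, hmin⟩ := G.exists_min_image (fun s => s.edges.card) ⟨s₀, mem_filter.2 ⟨hs₀, hts₀⟩⟩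
  obtain ⟨hu, htu⟩ := mem_filter.1 huG
  obtain ⟨f, hf⟩ := hne
  refine ⟨u, hu, htu, fun s hs hts => ?_⟩
  rcases hT.1.subset_or_subset_of_mem_edges hu hs (htu hf) (hts hf) with h | h
  · exact h
  · rw [eq_of_subset_of_card_le h (hmin s (mem_filter.2 ⟨hs, hts⟩))]

lemma existsUnique_isPrivateEdge (hT : IsMaxTubing E T) {e : Sym2 V} (he : e ∈ E) :
    ∃! u, u ∈ T ∧ IsPrivateEdge T u e := by
  obtain ⟨u, hu, heu, hmin⟩ :=
    hT.exists_minimal_superset (t := Tube.ofEdge he) ⟨e, mem_singleton_self e⟩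
  simp only [Tube.ofEdge_edges, singleton_subset_iff] at heu hmin
  refine ⟨u, ⟨hu, fun s hs => ⟨hmin s hs, fun h => h heu⟩⟩, fun u' ⟨hu', hpriv⟩ => ?_⟩
  have he' : e ∈ u'.edges := (hpriv u' hu').2 subset_rfl
  exact Tube.eq_of_edges_eq ⟨e, he'⟩ (((hpriv u hu).1 heu).antisymm (hmin u' hu' he'))

lemma filter_edges_eq_empty_eq_image (hiso : ∀ v : V, ∃ e ∈ E, v ∈ e)
    (hT : IsMaxTubing E T) : T.filter (·.edges = ∅) = univ.image (Tube.ofVertex hiso) := by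
  ext t
  simp only [mem_filter, mem_image, mem_univ, true_and]
  constructor
  · rintro ⟨-, h⟩
    obtain ⟨v, hv⟩ := t.nonempty
    exact ⟨v, (Tube.eq_ofVertex hiso h hv).symm⟩
  · rintro ⟨v, rfl⟩
    exact ⟨hT.mem_of_edges_eq_empty rfl, rfl⟩

/-- Each edge tube of `T` corresponds to its private edge. -/
lemma card_filter_edges_ne_empty (hT : IsMaxTubing E T) :
    (T.filter (¬ ·.edges = ∅)).card = E.card := by
  have hpriv : ∀ t ∈ T.filter (¬ ·.edges = ∅), ∃ f ∈ t.edges, IsPrivateEdge T t f :=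
    fun t ht => hT.1.exists_isPrivateEdge (mem_filter.1 ht).1
      (nonempty_iff_ne_empty.2 (mem_filter.1 ht).2)
  refine card_bij (fun t ht => (hpriv t ht).choose)
    (fun t ht => t.edges_sub (hpriv t ht).choose_spec.1) (fun t₁ ht₁ t₂ ht₂ h => ?_) fun e he => ?_
  · exact (hT.existsUnique_isPrivateEdge (t₁.edges_sub (hpriv t₁ ht₁).choose_spec.1)).unique
      ⟨(mem_filter.1 ht₁).1, (hpriv t₁ ht₁).choose_spec.2⟩
      ⟨(mem_filter.1 ht₂).1, h ▸ (hpriv t₂ ht₂).choose_spec.2⟩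
  · obtain ⟨u, ⟨hu, hue⟩, -⟩ := hT.existsUnique_isPrivateEdge he
    have hu' : u ∈ T.filter (¬ ·.edges = ∅) :=
      mem_filter.2 ⟨hu, ne_empty_of_mem ((hue u hu).2 subset_rfl)⟩
    exact ⟨u, hu', hT.isPrivateEdge_inj hu (hpriv u hu').choose_spec.2 hue⟩

lemma card_eq (hiso : ∀ v : V, ∃ e ∈ E, v ∈ e) (hT : IsMaxTubing E T) :
    T.card = Fintype.card V + E.card := by
  rw [← card_filter_add_card_filter_not (p := (·.edges = ∅)),
    hT.filter_edges_eq_empty_eq_image hiso,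
    card_image_of_injective _ (Tube.ofVertex_injective hiso), card_univ,
    hT.card_filter_edges_ne_empty]

end IsMaxTubing

end Tubings


section Weights

variable {E : Finset (Sym2 V)}

def vertexWeight (T : Finset (Tube E)) (c : Tube E → ℝ) (v : V) : ℝ :=
  ∑ t ∈ T with v ∈ t.verts, c t

def edgeWeight (T : Finset (Tube E)) (c : Tube E → ℝ) (e : Sym2 V) : ℝ :=
  ∑ t ∈ T with e ∈ t.edges, c t

lemma hvec_nonneg (t : Tube E) (i : Coord E) : 0 ≤ hvec t i := by
  rcases i with v | e <;> unfold hvec <;> split <;> positivity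

lemma ell_pos (t : Tube E) : 0 < ell t := by
  obtain ⟨v, hv⟩ := t.nonempty
  calc (0 : ℝ) < hvec t (Sum.inl v) := by simp [hvec, hv]
    _ ≤ ell t := single_le_sum (fun i _ => hvec_nonneg t i) (mem_univ _)

lemma hvec_inr (t : Tube E) {u w : V} (hne : u ≠ w) (he : s(u, w) ∈ E) :
    hvec t (Sum.inr ⟨s(u, w), he⟩) = (if u ∈ t.verts then 1 else 0)
      + (if w ∈ t.verts then 1 else 0) - 2 * (if s(u, w) ∈ t.edges then 1 else 0) := by
  by_cases hin : s(u, w) ∈ t.edges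
  · have hu := t.endpoints_mem _ hin u (Sym2.mem_mk_left u w)
    have hw := t.endpoints_mem _ hin w (Sym2.mem_mk_right u w)
    simp only [hvec, hin, hu, hw, if_true]
    norm_num
  · have hfilter : t.verts.filter (· ∈ s(u, w)) = t.verts ∩ {u, w} := by
      ext v; simp [and_comm]
    simp only [hvec, hin, if_false, hfilter]
    by_cases hu : u ∈ t.verts <;> by_cases hw : w ∈ t.verts <;>
      simp [hu, hw, hne, one_add_one_eq_two]

lemma sum_smul_hvec_inl (T : Finset (Tube E)) (c : Tube E → ℝ) (v : V) :
    (∑ t ∈ T, c t • hvec t) (Sum.inl v) = vertexWeight T c v := by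
  simp only [vertexWeight, sum_filter, Finset.sum_apply, Pi.smul_apply, smul_eq_mul, hvec, mul_ite,
    mul_one, mul_zero]

lemma sum_smul_hvec_inr (T : Finset (Tube E)) (c : Tube E → ℝ) {u w : V} (hne : u ≠ w)
    (he : s(u, w) ∈ E) :
    (∑ t ∈ T, c t • hvec t) (Sum.inr ⟨s(u, w), he⟩)
      = vertexWeight T c u + vertexWeight T c w - 2 * edgeWeight T c s(u, w) := by
  simp only [vertexWeight, edgeWeight, sum_filter, Finset.sum_apply, Pi.smul_apply, smul_eq_mul,
    hvec_inr _ hne he, mul_sum, ← sum_add_distrib, ← sum_sub_distrib]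
  refine sum_congr rfl fun t _ => ?_
  split_ifs <;> ring

lemma sum_smul_hvec_eq_iff (hE : ∀ e ∈ E, ¬ e.IsDiag) (T T' : Finset (Tube E))
    (c c' : Tube E → ℝ) :
    ∑ t ∈ T, c t • hvec t = ∑ t ∈ T', c' t • hvec t ↔
      (∀ v, vertexWeight T c v = vertexWeight T' c' v) ∧
        ∀ e ∈ E, edgeWeight T c e = edgeWeight T' c' e := by
  have hedge : ∀ e ∈ E, ∃ u w, u ≠ w ∧ e = s(u, w) := fun e he => by
    induction e using Sym2.ind with
    | _ u w => exact ⟨u, w, fun h => hE _ he (Sym2.mk_isDiag_iff.2 h), rfl⟩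
  constructor
  · intro h
    have hv : ∀ v, vertexWeight T c v = vertexWeight T' c' v := fun v => by
      rw [← sum_smul_hvec_inl, ← sum_smul_hvec_inl, h]
    refine ⟨hv, fun e he => ?_⟩
    obtain ⟨u, w, hne, rfl⟩ := hedge e he
    have := congrFun h (Sum.inr ⟨_, he⟩)
    rw [sum_smul_hvec_inr _ _ hne, sum_smul_hvec_inr _ _ hne, hv, hv] at this
    linarith
  · rintro ⟨hv, he⟩
    funext i
    rcases i with v | ⟨e, heE⟩
    · rw [sum_smul_hvec_inl, sum_smul_hvec_inl, hv]
    · obtain ⟨u, w, hne, rfl⟩ := hedge e heE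
      rw [sum_smul_hvec_inr _ _ hne, sum_smul_hvec_inr _ _ hne, hv, hv, he _ heE]

lemma sum_coords_sum_smul_hvec (T : Finset (Tube E)) (c : Tube E → ℝ) :
    ∑ i, (∑ t ∈ T, c t • hvec t) i = ∑ t ∈ T, c t * ell t := by
  simp only [Finset.sum_apply, Pi.smul_apply, smul_eq_mul, ell, mul_sum]
  exact sum_comm

lemma mem_convexHull_zvec_iff (T : Finset (Tube E)) {z : Coord E → ℝ} :
    z ∈ convexHull ℝ (zvec '' (T : Set (Tube E))) ↔
      z ∈ hyperplaneH E ∧ ∃ c : Tube E → ℝ, (∀ t ∈ T, 0 ≤ c t) ∧ z = ∑ t ∈ T, c t • hvec t := by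
  have hz : ∀ w : Tube E → ℝ, ∑ t ∈ T, w t • zvec t = ∑ t ∈ T, (w t / ell t) • hvec t :=
    fun w => sum_congr rfl fun t _ => by rw [zvec, smul_smul, div_eq_mul_inv]
  rw [mem_convexHull_image_iff]
  constructor
  · rintro ⟨w, hw0, hw1, rfl⟩
    refine ⟨?_, fun t => w t / ell t, fun t ht => div_nonneg (hw0 t ht) (ell_pos t).le, hz w⟩
    simp only [hyperplaneH, Set.mem_ofPred_eq, hz, sum_coords_sum_smul_hvec]
    rw [← hw1]
    exact sum_congr rfl fun t _ => div_mul_cancel₀ _ (ell_pos t).ne'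
  · rintro ⟨hH, c, hc0, rfl⟩
    refine ⟨fun t => c t * ell t, fun t ht => mul_nonneg (hc0 t ht) (ell_pos t).le, ?_, ?_⟩
    · rw [← sum_coords_sum_smul_hvec]; exact hH
    · rw [hz]
      exact sum_congr rfl fun t _ => by rw [mul_div_cancel_right₀ _ (ell_pos t).ne']

end Weights

section Simplices

variable {E : Finset (Sym2 V)} {T T₁ T₂ : Finset (Tube E)}

lemma dot_eq_linearMap (φ : (Coord E → ℝ) →ₗ[ℝ] ℝ) (x : Coord E → ℝ) :
    dot (fun i => φ (Pi.single i 1)) x = φ x := by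
  rw [dot, LinearMap.pi_apply_eq_sum_univ φ x]
  refine sum_congr rfl fun i _ => ?_
  rw [smul_eq_mul, mul_comm]
  congr 2
  funext j
  simp [Pi.single_apply, eq_comm]

def upperWeight (T : Finset (Tube E)) (c : Tube E → ℝ) (u : Tube E) : ℝ :=
  ∑ s ∈ T with u.edges ⊆ s.edges, c s

lemma IsPrivateEdge.edgeWeight_eq {u : Tube E} {f : Sym2 V} (h : IsPrivateEdge T u f)
    (c : Tube E → ℝ) : edgeWeight T c f = upperWeight T c u :=
  sum_congr (filter_congr h) fun _ _ => rfl

lemma upperWeight_le_edgeWeight {c : Tube E → ℝ} (hc : ∀ s ∈ T, 0 ≤ c s) {u : Tube E}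
    {f : Sym2 V} (hf : f ∈ u.edges) : upperWeight T c u ≤ edgeWeight T c f :=
  sum_le_sum_of_subset_of_nonneg
    (fun _ hs => mem_filter.2 ⟨(mem_filter.1 hs).1, (mem_filter.1 hs).2 hf⟩)
    fun s hs _ => hc s (mem_filter.1 hs).1

/-- The tubes of `T` containing an edge that leaves `t` through one of its vertices are
proper supertubes of `t`. -/
lemma IsTubing.edgeWeight_add_le_upperWeight (hT : IsTubing E T) {c : Tube E → ℝ}
    (hc : ∀ s ∈ T, 0 ≤ c s) {t : Tube E} (ht : t ∈ T) {f : Sym2 V} (hft : f ∉ t.edges)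
    {v : V} (hvf : v ∈ f) (hvt : v ∈ t.verts) : edgeWeight T c f + c t ≤ upperWeight T c t := by
  have hsub : T.filter (f ∈ ·.edges) ⊆ (T.filter (t.edges ⊆ ·.edges)).erase t := by
    intro s hs
    obtain ⟨hsT, hfs⟩ := mem_filter.1 hs
    rcases hT.subset_or_subset hsT ht (s.endpoints_mem f hfs v hvf) hvt with h | h
    · exact absurd (h hfs) hft
    · exact mem_erase.2 ⟨fun hst => hft (hst ▸ hfs), mem_filter.2 ⟨hsT, h⟩⟩
  have htmem : t ∈ T.filter (t.edges ⊆ ·.edges) := mem_filter.2 ⟨ht, subset_rfl⟩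
  rw [upperWeight, ← add_sum_erase _ _ htmem, add_comm]
  exact add_le_add_right (sum_le_sum_of_subset_of_nonneg hsub
    fun s hs _ => hc s (mem_filter.1 (mem_of_mem_erase hs)).1) _

/-- At a private edge of a largest edge tube with nonzero coefficient, the edge weight would be
that coefficient alone. -/
lemma IsTubing.eq_zero_of_edgeWeight_eq_zero (hT : IsTubing E T) {c : Tube E → ℝ}
    (he : ∀ e ∈ E, edgeWeight T c e = 0) {t : Tube E} (ht : t ∈ T) (hne : t.edges.Nonempty) :
    c t = 0 := by
  by_contra! hct
  obtain ⟨t, htN, hmax⟩ := (T.filter fun t => t.edges.Nonempty ∧ c t ≠ 0).exists_max_image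
    (·.edges.card) ⟨t, mem_filter.2 ⟨ht, hne, hct⟩⟩
  obtain ⟨ht, hne, hct⟩ := mem_filter.1 htN
  obtain ⟨f, hf, hpriv⟩ := hT.exists_isPrivateEdge ht hne
  refine hct ?_
  have htmem : t ∈ T.filter (t.edges ⊆ ·.edges) := mem_filter.2 ⟨ht, subset_rfl⟩
  rw [← he f (t.edges_sub hf), hpriv.edgeWeight_eq, upperWeight, sum_eq_single_of_mem t htmem]
  intro s hs hst
  obtain ⟨hsT, hts⟩ := mem_filter.1 hs
  by_contra hcs
  have hlt : t.edges.card < s.edges.card := card_lt_card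
    (ssubset_of_subset_of_ne hts fun h => hst (Tube.eq_of_edges_eq hne h).symm)
  exact (hmax s (mem_filter.2 ⟨hsT, hne.mono hts, hcs⟩)).not_gt hlt

lemma IsTubing.eq_zero_of_sum_smul_hvec_eq_zero (hE : ∀ e ∈ E, ¬ e.IsDiag)
    (hT : IsTubing E T) {c : Tube E → ℝ} (h : ∑ t ∈ T, c t • hvec t = 0) :
    ∀ t ∈ T, c t = 0 := by
  obtain ⟨hv, he⟩ := (sum_smul_hvec_eq_iff hE T ∅ c c).1 (by simpa using h)
  simp only [show ∀ x, vertexWeight ∅ c x = 0 by simp [vertexWeight],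
    show ∀ x, edgeWeight ∅ c x = 0 by simp [edgeWeight]] at hv he
  have hedge := fun t ht => hT.eq_zero_of_edgeWeight_eq_zero he (t := t) ht
  intro t ht
  rcases t.edges.eq_empty_or_nonempty with hempty | hne
  · obtain ⟨v, hv'⟩ := t.exists_verts_eq_singleton hempty
    have htmem : t ∈ T.filter (v ∈ ·.verts) := mem_filter.2 ⟨ht, hv' ▸ mem_singleton_self v⟩
    rw [← hv v, vertexWeight, sum_eq_single_of_mem t htmem]
    intro s hs hst
    obtain ⟨hsT, hvs⟩ := mem_filter.1 hs
    rcases s.edges.eq_empty_or_nonempty with hsempty | hsne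
    · obtain ⟨w, hw⟩ := s.exists_verts_eq_singleton hsempty
      rw [hw, mem_singleton] at hvs
      exact absurd (Tube.ext' (hw.trans (hvs ▸ hv'.symm)) (hsempty.trans hempty.symm)) hst
    · exact hedge s hsT hsne
  · exact hedge t ht hne

lemma IsTubing.linearIndepOn_hvec (hE : ∀ e ∈ E, ¬ e.IsDiag) (hT : IsTubing E T) :
    LinearIndepOn ℝ hvec (T : Set (Tube E)) :=
  linearIndepOn_finset_iff.2 fun _ h => hT.eq_zero_of_sum_smul_hvec_eq_zero hE h

lemma IsTubing.affineIndependent_zvec (hE : ∀ e ∈ E, ¬ e.IsDiag) (hT : IsTubing E T) :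
    AffineIndependent ℝ (fun t : {t // t ∈ T} => zvec t.1) := by
  have := (hT.linearIndepOn_hvec hE).units_smul
    fun t => Units.mk0 (ell t.1)⁻¹ (inv_ne_zero (ell_pos _).ne')
  exact this.affineIndependent

/-- The linear functional vanishing on `h_t` for `t ∈ T'` and equal to `1` on the other
vertices of the simplex cuts out the face `conv{z_t : t ∈ T'}`. -/
lemma isFace_convexHull_zvec_of_subset (hli : LinearIndepOn ℝ hvec (T : Set (Tube E)))
    {T' : Finset (Tube E)} (hT' : T' ⊆ T) :
    IsFace (convexHull ℝ (zvec '' (T' : Set (Tube E))))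
      (convexHull ℝ (zvec '' (T : Set (Tube E)))) := by
  classical
  obtain ⟨φ, hφ⟩ := hli.exists_linearMap_apply_eq fun t => if t ∈ T' then 0 else 1
  have hφsum : ∀ c : Tube E → ℝ,
      φ (∑ t ∈ T, c t • hvec t) = ∑ t ∈ T, if t ∈ T' then 0 else c t := fun c => by
    rw [map_sum]
    refine sum_congr rfl fun t ht => ?_
    rw [map_smul, hφ t ht, smul_eq_mul]
    split_ifs <;> simp
  refine Or.inr (Or.inr ⟨fun i => φ (Pi.single i 1), 0, ?_, ?_⟩)
  · intro x hx
    obtain ⟨-, c, hc, rfl⟩ := (mem_convexHull_zvec_iff T).1 hx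
    rw [dot_eq_linearMap, hφsum]
    exact sum_nonneg fun t ht => by split_ifs <;> simp [hc t ht]
  ext x
  simp only [Set.mem_ofPred_eq, dot_eq_linearMap]
  constructor
  · intro hx
    refine ⟨convexHull_mono (Set.image_mono (coe_subset.2 hT')) hx, ?_⟩
    obtain ⟨-, c, -, rfl⟩ := (mem_convexHull_zvec_iff T').1 hx
    rw [map_sum]
    exact sum_eq_zero fun t ht => by rw [map_smul, hφ t (hT' ht), if_pos ht, smul_zero]
  · rintro ⟨hx, hφx⟩
    obtain ⟨hH, c, hc, rfl⟩ := (mem_convexHull_zvec_iff T).1 hx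
    rw [hφsum, sum_eq_zero_iff_of_nonneg fun t ht => by split_ifs <;> simp [hc t ht]] at hφx
    have hsum : ∑ t ∈ T, c t • hvec t = ∑ t ∈ T', c t • hvec t :=
      (sum_subset hT' fun t ht htT' => by simp [(if_neg htT').symm.trans (hφx t ht)]).symm
    rw [hsum] at hH ⊢
    exact (mem_convexHull_zvec_iff T').2 ⟨hH, c, fun t ht => hc t (hT' ht), rfl⟩

/-- With `u` the smallest tube of `T₂` containing `t`, a private edge of `u` inside `t` and an
edge of `u` leaving `t` give `w(t) ≤ w(u) ≤ w(t) - a t` for the upper weights `w`. -/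
lemma mem_of_sum_smul_hvec_eq (hE : ∀ e ∈ E, ¬ e.IsDiag) (hT₁ : IsTubing E T₁)
    (hT₂ : IsMaxTubing E T₂) {a b : Tube E → ℝ} (ha : ∀ t ∈ T₁, 0 ≤ a t)
    (hb : ∀ t ∈ T₂, 0 ≤ b t) (heq : ∑ t ∈ T₁, a t • hvec t = ∑ t ∈ T₂, b t • hvec t)
    {t : Tube E} (ht : t ∈ T₁) (hat : 0 < a t) : t ∈ T₂ := by
  rcases t.edges.eq_empty_or_nonempty with hempty | hne
  · exact hT₂.mem_of_edges_eq_empty hempty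
  have hw := ((sum_smul_hvec_eq_iff hE T₁ T₂ a b).1 heq).2
  obtain ⟨u, hu, htu, hmin⟩ := hT₂.exists_minimal_superset hne
  by_cases htu' : t.edges = u.edges
  · exact Tube.eq_of_edges_eq hne htu' ▸ hu
  obtain ⟨f, hf, hpriv⟩ := hT₂.1.exists_isPrivateEdge_of_minimal hne hu htu hmin
  obtain ⟨f', hf'u, hf't, v, hvf', hvt⟩ := Tube.exists_boundary_edge hne htu htu'
  have := calc upperWeight T₁ a t
      ≤ edgeWeight T₁ a f := upperWeight_le_edgeWeight ha hf
    _ = upperWeight T₂ b u := (hw f (t.edges_sub hf)).trans (hpriv.edgeWeight_eq b)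
    _ ≤ edgeWeight T₂ b f' := upperWeight_le_edgeWeight hb hf'u
    _ = edgeWeight T₁ a f' := (hw f' (u.edges_sub hf'u)).symm
  linarith [hT₁.edgeWeight_add_le_upperWeight ha ht hf't hvf' hvt]

lemma IsMaxTubing.convexHull_inter (hE : ∀ e ∈ E, ¬ e.IsDiag) (hT₁ : IsMaxTubing E T₁)
    (hT₂ : IsMaxTubing E T₂) :
    convexHull ℝ (zvec '' (T₁ : Set (Tube E))) ∩ convexHull ℝ (zvec '' (T₂ : Set (Tube E)))
      = convexHull ℝ (zvec '' ((T₁ ∩ T₂ : Finset (Tube E)) : Set (Tube E))) := by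
  classical
  refine subset_antisymm ?_ (Set.subset_inter
    (convexHull_mono (Set.image_mono (coe_subset.2 inter_subset_left)))
    (convexHull_mono (Set.image_mono (coe_subset.2 inter_subset_right))))
  rintro z ⟨hz₁, hz₂⟩
  obtain ⟨hH, a, ha, rfl⟩ := (mem_convexHull_zvec_iff T₁).1 hz₁
  obtain ⟨-, b, hb, heq⟩ := (mem_convexHull_zvec_iff T₂).1 hz₂
  have hsupp : ∀ t ∈ T₁, t ∉ T₁ ∩ T₂ → a t = 0 := fun t ht hnot => by
    by_contra hat
    exact hnot (mem_inter.2 ⟨ht, mem_of_sum_smul_hvec_eq hE hT₁.1 hT₂ ha hb heq ht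
      (lt_of_le_of_ne (ha t ht) (Ne.symm hat))⟩)
  have hsum : ∑ t ∈ T₁, a t • hvec t = ∑ t ∈ T₁ ∩ T₂, a t • hvec t :=
    (sum_subset inter_subset_left fun t ht hnot => by rw [hsupp t ht hnot, zero_smul]).symm
  rw [hsum] at hH ⊢
  exact (mem_convexHull_zvec_iff _).2 ⟨hH, a, fun t ht => ha t (mem_inter.1 ht).1, rfl⟩

end Simplices

section Layering

variable {E : Finset (Sym2 V)}

def Tube.IsComponent (S : Finset (Sym2 V)) (t : Tube E) : Prop :=
  t.edges.Nonempty ∧ t.edges ⊆ S ∧ ∀ f ∈ S, ∀ v ∈ f, v ∈ t.verts → f ∈ t.edges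

namespace Tube.IsComponent

variable {S : Finset (Sym2 V)} {c : Tube E}

lemma edges_subset (hc : c.IsComponent S) {r : Tube E} (hrS : r.edges ⊆ S)
    (hmeet : ¬ Disjoint r.verts c.verts) : r.edges ⊆ c.edges := by
  obtain ⟨p, hpr, hpc⟩ := not_disjoint_iff.1 hmeet
  have hverts : ∀ w, Relation.ReflTransGen (EdgeRel r.edges) p w → w ∈ c.verts := by
    intro w h
    induction h with
    | refl => exact hpc
    | @tail a b _ hab ih =>
      exact c.endpoints_mem _ (hc.2.2 _ (hrS hab) a (Sym2.mem_mk_left a b) ih) b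
        (Sym2.mem_mk_right a b)
  intro f hf
  have hw := f.out_fst_mem
  exact hc.2.2 f (hrS hf) _ hw (hverts _ (r.conn p hpr _ (r.endpoints_mem f hf _ hw)))

lemma eq (hc : c.IsComponent S) {c' : Tube E} (hc' : c'.IsComponent S)
    (hmeet : ¬ Disjoint c.verts c'.verts) : c = c' :=
  Tube.eq_of_edges_eq hc.1 ((hc'.edges_subset hc.2.1 hmeet).antisymm
    (hc.edges_subset hc'.2.1 fun h => hmeet h.symm))

lemma exists_mem_edges (hc : c.IsComponent S) {v : V} (hv : v ∈ c.verts) :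
    ∃ f ∈ S, v ∈ f := by
  obtain ⟨f, hf, hvf⟩ := (c.mem_verts_iff hc.1).1 hv
  exact ⟨f, hc.2.1 hf, hvf⟩

end Tube.IsComponent

/-- The component of `f` is the union of all tubes inside `S` containing `f`. -/
lemma exists_isComponent {S : Finset (Sym2 V)} (hS : S ⊆ E) {f : Sym2 V} (hf : f ∈ S) :
    ∃ c : Tube E, c.IsComponent S ∧ f ∈ c.edges := by
  classical
  set F := univ.filter fun r : Tube E => f ∈ r.edges ∧ r.edges ⊆ S
  have hF : ∀ r ∈ F, ¬ Disjoint (Tube.ofEdge (hS hf)).verts r.verts := fun r hr =>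
    not_disjoint_iff.2 ⟨_, (Tube.mem_ofEdge_verts _).2 f.out_fst_mem,
      r.endpoints_mem f (mem_filter.1 hr).2.1 _ f.out_fst_mem⟩
  have hofEdge : ∀ {g} (hg : g ∈ S), (Tube.ofEdge (hS hg)).edges ⊆ S := fun hg => by simpa using hg
  set c := (Tube.ofEdge (hS hf)).biUnion F hF
  have hcS : c.edges ⊆ S :=
    union_subset (hofEdge hf) (biUnion_subset.2 fun r hr => (mem_filter.1 hr).2.2)
  refine ⟨c, ⟨⟨f, mem_union_left _ (mem_singleton_self f)⟩, hcS, fun g hg v hvg hvc => ?_⟩,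
    mem_union_left _ (mem_singleton_self f)⟩
  obtain ⟨r, hr, hvr⟩ : ∃ r ∈ F, v ∈ r.verts := by
    simp only [c, Tube.biUnion, mem_union, mem_biUnion] at hvc
    rcases hvc with hv | h
    · exact ⟨_, mem_filter.2 ⟨mem_univ _, mem_singleton_self f, hofEdge hf⟩, hv⟩
    · exact h
  have hmeet : ∀ s ∈ ({Tube.ofEdge (hS hg)} : Finset (Tube E)), ¬ Disjoint r.verts s.verts :=
    fun s hs => not_disjoint_iff.2
      ⟨v, hvr, mem_singleton.1 hs ▸ (Tube.mem_ofEdge_verts _).2 hvg⟩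
  have hr' : r.biUnion _ hmeet ∈ F := mem_filter.2
    ⟨mem_univ _, mem_union_left _ (mem_filter.1 hr).2.1,
      union_subset (mem_filter.1 hr).2.2 (by simpa using hg)⟩
  exact Tube.edges_subset_biUnion hr' (mem_union_right _ (by simp))

/-- A layer-cake decomposition of the edge weighting `g` into compatible tubes; the bound on
vertex weights leaves room for the singleton tubes. -/
structure IsLayering (g : Sym2 V → ℝ) (lam : Tube E → ℝ) : Prop where
  nonneg : ∀ t, 0 ≤ lam t
  support : ∀ t, lam t ≠ 0 → t.edges.Nonempty ∧ ∀ f ∈ t.edges, 0 < g f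
  compatible : ∀ t s, lam t ≠ 0 → lam s ≠ 0 → t.Compatible s
  edgeWeight_eq : ∀ f ∈ E, edgeWeight univ lam f = g f
  vertexWeight_le : ∀ v x, 0 ≤ x → (∀ f ∈ E, v ∈ f → g f ≤ x) → vertexWeight univ lam v ≤ x

lemma isLayering_zero {g : Sym2 V → ℝ} (hg : ∀ f ∈ E, g f = 0) :
    IsLayering (E := E) g 0 where
  nonneg _ := le_rfl
  support _ h := absurd rfl h
  compatible _ _ h := absurd rfl h
  edgeWeight_eq f hf := by simp [edgeWeight, hg f hf]
  vertexWeight_le _ _ hx _ := by simpa [vertexWeight] using hx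

lemma card_filter_isComponent_mem_edges {S : Finset (Sym2 V)} (hS : S ⊆ E) (f : Sym2 V)
    [DecidablePred (Tube.IsComponent (E := E) S)] :
    (univ.filter fun t : Tube E => f ∈ t.edges ∧ t.IsComponent S).card
      = if f ∈ S then 1 else 0 := by
  split_ifs with hf
  · obtain ⟨c, hc, hfc⟩ := exists_isComponent hS hf
    refine card_eq_one.2 ⟨c, eq_singleton_iff_unique_mem.2 ⟨mem_filter.2 ⟨mem_univ _, hfc, hc⟩,
      fun c' hc' => ?_⟩⟩
    obtain ⟨-, hfc', hc'⟩ := mem_filter.1 hc'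
    exact hc'.eq hc (not_disjoint_iff.2 ⟨_, c'.endpoints_mem f hfc' _ f.out_fst_mem,
      c.endpoints_mem f hfc _ f.out_fst_mem⟩)
  · exact card_eq_zero.2 (filter_eq_empty_iff.2 fun t _ ⟨hft, ht⟩ => hf (ht.2.1 hft))

lemma card_filter_isComponent_mem_verts_le {S : Finset (Sym2 V)} (v : V)
    [DecidablePred (Tube.IsComponent (E := E) S)] :
    (univ.filter fun t : Tube E => v ∈ t.verts ∧ t.IsComponent S).card
      ≤ if ∃ f ∈ S, v ∈ f then 1 else 0 := by
  split_ifs with hv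
  · refine card_le_one.2 fun c hc c' hc' => ?_
    obtain ⟨-, hvc, hc⟩ := mem_filter.1 hc
    obtain ⟨-, hvc', hc'⟩ := mem_filter.1 hc'
    exact hc.eq hc' (not_disjoint_iff.2 ⟨v, hvc, hvc'⟩)
  · exact (card_eq_zero.2 (filter_eq_empty_iff.2 fun t _ ⟨hvt, ht⟩ =>
      hv (ht.exists_mem_edges hvt))).le

/-- At most one component of `S` contains `v`, and if one does, `g` exceeds `θ` at some edge
at `v`, so the layering of `g'` has vertex weight at most `x - θ` there. -/
lemma IsLayering.vertexWeight_add_components_le {g g' : Sym2 V → ℝ} {lam : Tube E → ℝ}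
    (hlam : IsLayering g' lam) {S : Finset (Sym2 V)} [DecidablePred (Tube.IsComponent (E := E) S)]
    (hS : S ⊆ E) {θ : ℝ} (hθ : 0 < θ) (hg'0 : ∀ f ∈ E, 0 ≤ g' f)
    (hg'S : ∀ f ∈ E, 0 < g' f → f ∈ S) (hg : ∀ f ∈ E, g f = g' f + if f ∈ S then θ else 0)
    {v : V} {x : ℝ} (hx : 0 ≤ x) (hgx : ∀ f ∈ E, v ∈ f → g f ≤ x) :
    vertexWeight univ lam v
      + θ * (univ.filter fun t : Tube E => v ∈ t.verts ∧ t.IsComponent S).card ≤ x := by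
  have hcount := card_filter_isComponent_mem_verts_le (E := E) (S := S) v
  split_ifs at hcount with hvS
  · obtain ⟨f₁, hf₁S, hvf₁⟩ := hvS
    have hθx : θ ≤ x := by
      have := hgx f₁ (hS hf₁S) hvf₁
      rw [hg f₁ (hS hf₁S), if_pos hf₁S] at this
      linarith [hg'0 f₁ (hS hf₁S)]
    have := hlam.vertexWeight_le v (x - θ) (sub_nonneg.2 hθx) fun f hf hvf => by
      have := hgx f hf hvf
      rw [hg f hf] at this
      split_ifs at this with hfS
      · linarith
      · linarith [(hg'0 f hf).eq_or_lt.resolve_right fun h => hfS (hg'S f hf h)]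
    have hc : ((univ.filter fun t : Tube E => v ∈ t.verts ∧ t.IsComponent S).card : ℝ) ≤ 1 := by
      exact_mod_cast hcount
    nlinarith
  · have := hlam.vertexWeight_le v x hx fun f hf hvf => by
      have := hgx f hf hvf
      rw [hg f hf] at this
      split_ifs at this <;> linarith
    have hzero :
        ((univ.filter fun t : Tube E => v ∈ t.verts ∧ t.IsComponent S).card : ℝ) = 0 := by
      exact_mod_cast Nat.le_zero.1 hcount
    rwa [hzero, mul_zero, add_zero]

/-- Adding a layer of height `θ` on an edge set `S` containing the support of `g'`: the
components of `S` are compatible with the tubes of a layering of `g'`, which lie inside `S`. -/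
lemma IsLayering.add_components {g g' : Sym2 V → ℝ} {lam : Tube E → ℝ} (hlam : IsLayering g' lam)
    {S : Finset (Sym2 V)} [DecidablePred (Tube.IsComponent (E := E) S)] (hS : S ⊆ E) {θ : ℝ}
    (hθ : 0 < θ) (hg'0 : ∀ f ∈ E, 0 ≤ g' f)
    (hg'S : ∀ f ∈ E, 0 < g' f → f ∈ S) (hg : ∀ f ∈ E, g f = g' f + if f ∈ S then θ else 0) :
    IsLayering g fun t => lam t + if t.IsComponent S then θ else 0 := by
  have hweight : ∀ (p : Tube E → Prop) [DecidablePred p],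
      ∑ t ∈ univ.filter p, (lam t + if t.IsComponent S then θ else 0)
        = ∑ t ∈ univ.filter p, lam t + θ * (univ.filter fun t => p t ∧ t.IsComponent S).card := by
    intro p _
    rw [sum_add_distrib, sum_ite, sum_const_zero, add_zero, sum_const, filter_filter,
      nsmul_eq_mul, mul_comm]
  have hlamS : ∀ t, lam t ≠ 0 → t.edges ⊆ S := fun t ht f hf =>
    hg'S f (t.edges_sub hf) ((hlam.support t ht).2 f hf)
  have hcases : ∀ t, lam t + (if t.IsComponent S then θ else 0) ≠ 0 →
      lam t ≠ 0 ∨ t.IsComponent S := fun t ht => by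
    by_contra! h
    exact ht (by simp [h.1, h.2])
  refine ⟨fun t => add_nonneg (hlam.nonneg t) (ite_nonneg hθ.le le_rfl), fun t ht => ?_,
    fun t s ht hs => ?_, fun f hf => ?_, fun v x hx hgx => ?_⟩
  · have hpos : ∀ f ∈ t.edges, f ∈ S → 0 < g f := fun f hf hfS => by
      rw [hg f (t.edges_sub hf), if_pos hfS]
      linarith [hg'0 f (t.edges_sub hf)]
    rcases hcases t ht with h | h
    · exact ⟨(hlam.support t h).1, fun f hf => hpos f hf (hlamS t h hf)⟩
    · exact ⟨h.1, fun f hf => hpos f hf (h.2.1 hf)⟩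
  · by_cases hd : Disjoint t.verts s.verts
    · exact Or.inl hd
    rcases hcases t ht with h₁ | h₁ <;> rcases hcases s hs with h₂ | h₂
    · exact hlam.compatible t s h₁ h₂
    · exact Or.inr (Or.inl (h₂.edges_subset (hlamS t h₁) hd))
    · exact Or.inr (Or.inr (h₁.edges_subset (hlamS s h₂) fun h => hd h.symm))
    · exact Or.inr (Or.inl (h₁.eq h₂ hd ▸ subset_rfl))
  · rw [edgeWeight, hweight, card_filter_isComponent_mem_edges hS, ← edgeWeight,
      hlam.edgeWeight_eq f hf, hg f hf]
    split_ifs <;> ring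
  · rw [vertexWeight, hweight, ← vertexWeight]
    exact hlam.vertexWeight_add_components_le hS hθ hg'0 hg'S hg hx hgx

lemma exists_isLayering (g : Sym2 V → ℝ) (hg : ∀ f ∈ E, 0 ≤ g f) :
    ∃ lam : Tube E → ℝ, IsLayering g lam := by
  classical
  induction hn : (E.filter (0 < g ·)).card using Nat.strong_induction_on generalizing g with
  | _ n ih =>
  set S := E.filter (0 < g ·)
  have hzero : ∀ f ∈ E, f ∉ S → g f = 0 := fun f hf hfS =>
    le_antisymm (not_lt.1 fun h => hfS (mem_filter.2 ⟨hf, h⟩)) (hg f hf)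
  rcases S.eq_empty_or_nonempty with hS | hS
  · exact ⟨0, isLayering_zero fun f hf => hzero f hf (hS ▸ notMem_empty f)⟩
  -- peel off the lowest layer, whose height is the least positive value of `g`
  obtain ⟨fmin, hfmin, hmin⟩ := S.exists_min_image g hS
  set g' : Sym2 V → ℝ := fun f => if f ∈ S then g f - g fmin else 0
  have hg'0 : ∀ f ∈ E, 0 ≤ g' f := fun f _ => by
    simp only [g']; split_ifs with h; exacts [sub_nonneg.2 (hmin f h), le_rfl]
  have hg'S : ∀ f ∈ E, 0 < g' f → f ∈ S := fun f _ h => by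
    by_contra hf; simp [g', hf] at h
  have hcard : (E.filter (0 < g' ·)).card < n := hn ▸ card_lt_card
    ⟨fun f hf => hg'S f (mem_filter.1 hf).1 (mem_filter.1 hf).2,
      fun h => by simpa [g', hfmin] using (mem_filter.1 (h hfmin)).2⟩
  obtain ⟨lam, hlam⟩ := ih _ hcard g' hg'0 rfl
  refine ⟨_, hlam.add_components (filter_subset _ E) (mem_filter.1 hfmin).2 hg'0 hg'S
    fun f hf => ?_⟩
  simp only [g']
  split_ifs with hfS
  · ring
  · simp [hzero f hf hfS]

end Layering

section Covering

variable {E : Finset (Sym2 V)}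

lemma edgeWeight_le_vertexWeight {T : Finset (Tube E)} {c : Tube E → ℝ}
    (hc : ∀ t ∈ T, 0 ≤ c t) {f : Sym2 V} {v : V} (hvf : v ∈ f) :
    edgeWeight T c f ≤ vertexWeight T c v :=
  sum_le_sum_of_subset_of_nonneg (fun t ht => mem_filter.2
      ⟨(mem_filter.1 ht).1, t.endpoints_mem f (mem_filter.1 ht).2 v hvf⟩)
    fun t ht _ => hc t (mem_filter.1 ht).1

lemma filter_mem_verts_edges_eq_empty (hiso : ∀ v : V, ∃ e ∈ E, v ∈ e) (v : V) :
    univ.filter (fun t : Tube E => v ∈ t.verts ∧ t.edges = ∅) = {Tube.ofVertex hiso v} := by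
  ext t
  simp only [mem_filter, mem_univ, true_and, mem_singleton]
  constructor
  · rintro ⟨hv, h⟩
    exact Tube.eq_ofVertex hiso h hv
  · rintro rfl
    exact ⟨mem_singleton_self v, rfl⟩

lemma dualCosmo_eq_convexHull_univ :
    dualCosmo E = convexHull ℝ (zvec '' ((univ : Finset (Tube E)) : Set (Tube E))) := by
  rw [dualCosmo, coe_univ, Set.image_univ]
  congr 1
  ext
  simp [eq_comm]

/-- Layer the edge weights of `c`, then make up the vertex weights with singleton tubes. -/
lemma exists_isTubing_sum_smul_hvec_eq (hE : ∀ e ∈ E, ¬ e.IsDiag)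
    (hiso : ∀ v : V, ∃ e ∈ E, v ∈ e) {c : Tube E → ℝ} (hc : ∀ t, 0 ≤ c t) :
    ∃ lam : Tube E → ℝ, (∀ t, 0 ≤ lam t) ∧ IsTubing E (univ.filter (lam · ≠ 0)) ∧
      ∑ t, lam t • hvec t = ∑ t, c t • hvec t := by
  classical
  have hc' : ∀ t ∈ univ, 0 ≤ c t := fun t _ => hc t
  obtain ⟨lam, hlam⟩ := exists_isLayering (E := E) (edgeWeight univ c) fun _ _ =>
    sum_nonneg fun t _ => hc t
  set μ : V → ℝ := fun v => vertexWeight univ c v - vertexWeight univ lam v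
  have hμ : ∀ v, 0 ≤ μ v := fun v => sub_nonneg.2 (hlam.vertexWeight_le v _
    (sum_nonneg fun t _ => hc t) fun _ _ hvf => edgeWeight_le_vertexWeight hc' hvf)
  set lam' : Tube E → ℝ := fun t => lam t + if t.edges = ∅ then ∑ v ∈ t.verts, μ v else 0
  have hlam' : ∀ r : Tube E, r.edges.Nonempty → lam' r = lam r := fun r hr => by
    simp [lam', hr.ne_empty]
  refine ⟨lam', fun t => add_nonneg (hlam.nonneg t) (ite_nonneg (sum_nonneg fun v _ => hμ v)
    le_rfl), fun t ht s hs => ?_,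
    (sum_smul_hvec_eq_iff hE _ _ _ _).2 ⟨fun v => ?_, fun f hf => ?_⟩⟩
  · rcases t.edges.eq_empty_or_nonempty with h | h
    · exact Tube.compatible_of_edges_eq_empty h s
    rcases s.edges.eq_empty_or_nonempty with h' | h'
    · exact (Tube.compatible_of_edges_eq_empty h' t).symm
    exact hlam.compatible t s (hlam' t h ▸ (mem_filter.1 ht).2) (hlam' s h' ▸ (mem_filter.1 hs).2)
  · rw [vertexWeight, sum_add_distrib, sum_ite, sum_const_zero, add_zero, filter_filter,
      filter_mem_verts_edges_eq_empty hiso v, sum_singleton, ← vertexWeight]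
    simp [μ, Tube.ofVertex]
  · have hempty : univ.filter (fun t : Tube E => f ∈ t.edges ∧ t.edges = ∅) = ∅ :=
      filter_eq_empty_iff.2 fun t _ ⟨hft, h⟩ => by simp [h] at hft
    rw [edgeWeight, sum_add_distrib, sum_ite, sum_const_zero, add_zero, filter_filter, hempty,
      sum_empty, add_zero, ← edgeWeight, hlam.edgeWeight_eq f hf]

lemma exists_isMaxTubing_mem_convexHull (hE : ∀ e ∈ E, ¬ e.IsDiag)
    (hiso : ∀ v : V, ∃ e ∈ E, v ∈ e) {z : Coord E → ℝ} (hz : z ∈ dualCosmo E) :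
    ∃ T, IsMaxTubing E T ∧ z ∈ convexHull ℝ (zvec '' (T : Set (Tube E))) := by
  obtain ⟨hH, c, hc, rfl⟩ :=
    (mem_convexHull_zvec_iff univ).1 (dualCosmo_eq_convexHull_univ (E := E) ▸ hz)
  obtain ⟨lam, hlam0, htub, hsum⟩ :=
    exists_isTubing_sum_smul_hvec_eq hE hiso fun t => hc t (mem_univ t)
  obtain ⟨T, hT, hT₀⟩ := exists_isMaxTubing_superset htub
  have hsub : ∑ t, lam t • hvec t = ∑ t ∈ T, lam t • hvec t :=
    (sum_subset (subset_univ T) fun t _ htT => by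
      by_contra h
      exact htT (hT₀ (mem_filter.2 ⟨mem_univ t, fun h0 => h (by rw [h0, zero_smul])⟩))).symm
  rw [← hsum, hsub] at hH ⊢
  exact ⟨T, hT, (mem_convexHull_zvec_iff T).2 ⟨hH, lam, fun t _ => hlam0 t, rfl⟩⟩

end Covering

/-- The simplices `σ_T = conv{ z_t : t ∈ T }`, for `T` a maximal
tubing of `G`, form a triangulation of the dual cosmological polytope `C_G°`: each
`σ_T` is a simplex of dimension `|V|+|E|-1` (its `|V|+|E|` vertices are affinely
independent), the union of the `σ_T` is `C_G°`, and any two of them intersect in the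
convex hull of their common vertices, which is a common face. -/
theorem statement11 (E : Finset (Sym2 V)) (hE : ∀ e ∈ E, ¬ e.IsDiag)
    (hiso : ∀ v : V, ∃ e ∈ E, v ∈ e) :
    (∀ T : Finset (Tube E), IsMaxTubing E T →
        T.card = Fintype.card V + E.card ∧
        AffineIndependent ℝ (fun t : {t // t ∈ T} => zvec t.1)) ∧
    (⋃ T ∈ {T : Finset (Tube E) | IsMaxTubing E T},
        convexHull ℝ (zvec '' (T : Set (Tube E)))) = dualCosmo E ∧
    (∀ T₁ T₂ : Finset (Tube E), IsMaxTubing E T₁ → IsMaxTubing E T₂ →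
        convexHull ℝ (zvec '' (T₁ : Set (Tube E))) ∩
            convexHull ℝ (zvec '' (T₂ : Set (Tube E)))
          = convexHull ℝ (zvec '' ((T₁ ∩ T₂ : Finset (Tube E)) : Set (Tube E))) ∧
        IsFace
          (convexHull ℝ (zvec '' (T₁ : Set (Tube E))) ∩
            convexHull ℝ (zvec '' (T₂ : Set (Tube E))))
          (convexHull ℝ (zvec '' (T₁ : Set (Tube E)))) ∧
        IsFace
          (convexHull ℝ (zvec '' (T₁ : Set (Tube E))) ∩
            convexHull ℝ (zvec '' (T₂ : Set (Tube E))))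
          (convexHull ℝ (zvec '' (T₂ : Set (Tube E))))) := by
  refine ⟨fun T hT => ⟨hT.card_eq hiso, hT.1.affineIndependent_zvec hE⟩, ?_,
    fun T₁ T₂ h₁ h₂ => ?_⟩
  · refine subset_antisymm (Set.iUnion₂_subset fun T _ =>
      convexHull_mono (Set.image_subset_iff.2 fun t _ => ⟨t, rfl⟩)) fun z hz => ?_
    obtain ⟨T, hT, hzT⟩ := exists_isMaxTubing_mem_convexHull hE hiso hz
    exact Set.mem_iUnion₂.2 ⟨T, hT, hzT⟩
  · rw [h₁.convexHull_inter hE h₂]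
    exact ⟨rfl, isFace_convexHull_zvec_of_subset (h₁.1.linearIndepOn_hvec hE) inter_subset_left,
      isFace_convexHull_zvec_of_subset (h₂.1.linearIndepOn_hvec hE) inter_subset_right⟩
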